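/- Let (K,{Fᵢ}₁ᴺ) be a self-similar set satisfying the weak overlapping condition (WOC_ρ) with bound L₁, and let the probability weights p satisfy the average condition (AV_ρ) with comparability constant C₊ on intersecting cells of equal partition level. Then there exists C_μ > 0 such that the self-similar measure μ satisfies μ(K_τ) ≤ C_μ · p_τ for every finite word τ. One may take C_μ = C₊·L₁. -/

import Mathlib

/-!
Iterating the self-similarity identity along the stopping-time tree of the weights `ρ` gives
`μ(K_τ) = ∑_{v ∈ Λ} p_v μ(F_v⁻¹ K_τ)` over finitely many words `Λ ⊆ Λ_ρ(ρ_τ)`. Only words whose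
cell meets `K_τ` contribute, each at most `p_v ≤ C₊ p_τ` by (AV_ρ). As `diam K_τ ≤ ρ_τ diam K`,
these cells all meet the ball of radius `C₁ diam K ρ_τ` about a point of `K_τ`, so (WOC_ρ)
leaves at most `L₁` of them.
-/

open MeasureTheory

namespace SSS

/-- The weight of a finite word: the product of the tuple entries along the word. -/
def wt {N : ℕ} (θ : Fin N → ℝ) (w : List (Fin N)) : ℝ := (w.map θ).prod

/-- The partition `Λ_θ(r)`: non-empty words `w` with `θ_w ≤ r < θ_w / θ_{w_last}`. -/
def partition {N : ℕ} (θ : Fin N → ℝ) (r : ℝ) : Set (List (Fin N)) :=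
  {w | ∃ h : w ≠ [], wt θ w ≤ r ∧ r < wt θ w / θ (w.getLast h)}

/-- The iterated map `F_w = F_{w₁} ∘ ⋯ ∘ F_{wₙ}`. -/
def Fword {M : Type*} {N : ℕ} (F : Fin N → M → M) : List (Fin N) → M → M
  | [] => id
  | i :: w => F i ∘ Fword F w

/-- The cell `K_w = F_w(K)`. -/
def cell {M : Type*} {N : ℕ} (F : Fin N → M → M) (K : Set M)
    (w : List (Fin N)) : Set M := Fword F w '' K

section Development

open Finset Topology

variable {N : ℕ}

section Weights

variable {θ : Fin N → ℝ}

lemma wt_nil : wt θ [] = 1 := rfl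

lemma wt_append (w v : List (Fin N)) : wt θ (w ++ v) = wt θ w * wt θ v := by
  simp [wt]

lemma wt_cons (i : Fin N) (w : List (Fin N)) : wt θ (i :: w) = θ i * wt θ w := by
  simp [wt]

lemma wt_singleton (i : Fin N) : wt θ [i] = θ i := by
  simp [wt]

lemma wt_pos (hθ : ∀ i, 0 < θ i) (w : List (Fin N)) : 0 < wt θ w :=
  List.prod_pos (by simpa using fun i _ => hθ i)

lemma wt_le_pow_length {c : ℝ} (hθ : ∀ i, 0 ≤ θ i) (hc : ∀ i, θ i ≤ c) (w : List (Fin N)) :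
    wt θ w ≤ c ^ w.length := by
  simpa [wt, List.map_const', List.prod_replicate] using
    List.prod_map_le_prod_map₀ (s := w) θ (fun _ => c) (fun i _ => hθ i) (fun i _ => hc i)

lemma wt_lt_one (hθ : ∀ i, θ i ∈ Set.Ioo (0 : ℝ) 1) {w : List (Fin N)} (hw : w ≠ []) :
    wt θ w < 1 := by
  simpa [wt, List.map_const', List.prod_replicate] using
    List.prod_map_lt_prod_map hw θ (fun _ => 1) (fun i _ => (hθ i).1) (fun i _ => (hθ i).2)

lemma exists_uniform_bound_lt_one (hθ : ∀ i, θ i < 1) :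
    ∃ c, 0 < c ∧ c < 1 ∧ ∀ i, θ i ≤ c := by
  have hle : ∀ᶠ c in 𝓝[<] (1 : ℝ), ∀ i, θ i ≤ c :=
    Filter.eventually_all.2 fun i =>
      Filter.mem_of_superset (Ioo_mem_nhdsLT (hθ i)) fun _ hc => hc.1.le
  obtain ⟨c, ⟨hc0, hc1⟩, hc⟩ :=
    Filter.nonempty_of_mem (Filter.inter_mem (Ioo_mem_nhdsLT zero_lt_one) hle)
  exact ⟨c, hc0, hc1, hc⟩

end Weights

section Partition

variable {θ : Fin N → ℝ} {r : ℝ}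

lemma lt_wt_dropLast_of_mem_partition (hθ : ∀ i, θ i ≠ 0) {v : List (Fin N)}
    (hv : v ∈ partition θ r) : r < wt θ v.dropLast := by
  obtain ⟨hne, -, hlt⟩ := hv
  have hsplit : wt θ v = wt θ v.dropLast * θ (v.getLast hne) := by
    conv_lhs => rw [← List.dropLast_append_getLast hne]
    rw [wt_append, wt_singleton]
  rwa [hsplit, mul_div_cancel_right₀ _ (hθ _)] at hlt

lemma append_singleton_mem_partition {u : List (Fin N)} {i : Fin N} (hθ : θ i ≠ 0)
    (hle : wt θ (u ++ [i]) ≤ r) (hlt : r < wt θ u) : u ++ [i] ∈ partition θ r :=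
  ⟨by simp, hle, by
    rwa [List.getLast_append_singleton, wt_append, wt_singleton, mul_div_cancel_right₀ _ hθ]⟩

lemma partition_finite (hθ : ∀ i, θ i ∈ Set.Ioo (0 : ℝ) 1) (hr : 0 < r) :
    (partition θ r).Finite := by
  obtain ⟨c, hc0, hc1, hc⟩ := exists_uniform_bound_lt_one fun i => (hθ i).2
  obtain ⟨n, hn⟩ := exists_pow_lt_of_lt_one hr hc1
  refine (List.finite_length_le (Fin N) (n + 1)).subset fun v hv => ?_
  have hlen : v.dropLast.length < n := by
    by_contra! h
    have hr_lt := lt_wt_dropLast_of_mem_partition (fun i => (hθ i).1.ne') hv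
    have hwt := wt_le_pow_length (fun i => (hθ i).1.le) hc v.dropLast
    linarith [pow_le_pow_of_le_one hc0.le hc1.le h]
  simp only [List.length_dropLast] at hlen
  show v.length ≤ n + 1
  omega

/-- The leaves of the tree grown from `w` by appending letters until the weight is at most `r`,
truncated after `n` generations. -/
noncomputable def expansion (θ : Fin N → ℝ) (r : ℝ) : ℕ → List (Fin N) → Finset (List (Fin N))
  | 0, w => {w}
  | n + 1, w =>
    if wt θ w ≤ r then {w} else Finset.univ.biUnion fun i => expansion θ r n (w ++ [i])

lemma prefix_of_mem_expansion :
    ∀ {n : ℕ} {w v : List (Fin N)}, v ∈ expansion θ r n w → w <+: v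
  | 0, w, v, hv => by
    rw [expansion, Finset.mem_singleton] at hv
    exact hv ▸ List.prefix_refl w
  | n + 1, w, v, hv => by
    rw [expansion] at hv
    split_ifs at hv
    · rw [Finset.mem_singleton] at hv
      exact hv ▸ List.prefix_refl w
    · obtain ⟨i, -, hi⟩ := Finset.mem_biUnion.1 hv
      exact (w.prefix_append [i]).trans (prefix_of_mem_expansion hi)

lemma pairwiseDisjoint_expansion_append_singleton (n : ℕ) (w : List (Fin N)) :
    (Set.univ : Set (Fin N)).PairwiseDisjoint fun i => expansion θ r n (w ++ [i]) := by
  intro i _ j _ hij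
  refine Finset.disjoint_left.2 fun v hvi hvj => hij ?_
  have hprefix := List.prefix_of_prefix_length_le (prefix_of_mem_expansion hvi)
    (prefix_of_mem_expansion hvj) (by simp)
  simpa using hprefix.eq_of_length (by simp)

lemma mem_expansion {c : ℝ} (hθ : ∀ i, 0 < θ i) (hc : ∀ i, θ i ≤ c) (hc0 : 0 ≤ c) :
    ∀ {n : ℕ} {w v : List (Fin N)}, c ^ n * wt θ w ≤ r → v ∈ expansion θ r n w →
      (v = w ∧ wt θ w ≤ r) ∨ v ∈ partition θ r
  | 0, w, v, hfuel, hv => by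
    rw [expansion, Finset.mem_singleton] at hv
    exact .inl ⟨hv, by simpa using hfuel⟩
  | n + 1, w, v, hfuel, hv => by
    rw [expansion] at hv
    split_ifs at hv with hw
    · exact .inl ⟨Finset.mem_singleton.1 hv, hw⟩
    · obtain ⟨i, -, hi⟩ := Finset.mem_biUnion.1 hv
      have hfuel' : c ^ n * wt θ (w ++ [i]) ≤ r := by
        have := mul_le_mul_of_nonneg_left (hc i) (mul_nonneg (pow_nonneg hc0 n)
          (wt_pos hθ w).le)
        rw [wt_append, wt_singleton]
        linarith [show c ^ (n + 1) * wt θ w = c ^ n * wt θ w * c by ring]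
      rcases mem_expansion hθ hc hc0 hfuel' hi with ⟨rfl, hle⟩ | hmem
      · exact .inr (append_singleton_mem_partition (hθ i).ne' hle (not_le.1 hw))
      · exact .inr hmem

end Partition

section Maps

variable {M : Type*} {F : Fin N → M → M}

lemma Fword_append (w v : List (Fin N)) : Fword F (w ++ v) = Fword F w ∘ Fword F v := by
  induction w with
  | nil => rfl
  | cons i w ih => simp [Fword, ih, Function.comp_assoc]

lemma preimage_Fword_append_singleton (w : List (Fin N)) (i : Fin N) (A : Set M) :
    Fword F (w ++ [i]) ⁻¹' A = F i ⁻¹' (Fword F w ⁻¹' A) := by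
  rw [Fword_append, Set.preimage_comp]
  rfl

lemma measurable_Fword [MeasurableSpace M] (hF : ∀ i, Measurable (F i)) :
    ∀ w : List (Fin N), Measurable (Fword F w)
  | [] => measurable_id
  | i :: w => (hF i).comp (measurable_Fword hF w)

lemma continuous_Fword [TopologicalSpace M] (hF : ∀ i, Continuous (F i)) :
    ∀ w : List (Fin N), Continuous (Fword F w)
  | [] => continuous_id
  | i :: w => (hF i).comp (continuous_Fword hF w)

lemma cell_subset {K : Set M} (hself : K = ⋃ i, F i '' K) :
    ∀ w : List (Fin N), cell F K w ⊆ K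
  | [] => by simp [cell, Fword]
  | i :: w => by
    rintro _ ⟨y, hy, rfl⟩
    rw [hself]
    exact Set.mem_iUnion.2 ⟨i, Fword F w y, cell_subset hself w ⟨y, hy, rfl⟩, rfl⟩

variable [MetricSpace M] {ρ : Fin N → ℝ}

lemma dist_Fword_le (hρ : ∀ i, 0 ≤ ρ i)
    (hcontr : ∀ i, ∀ x y : M, dist (F i x) (F i y) ≤ ρ i * dist x y) (x y : M) :
    ∀ w : List (Fin N), dist (Fword F w x) (Fword F w y) ≤ wt ρ w * dist x y
  | [] => by simp [Fword, wt]
  | i :: w => by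
    have := mul_le_mul_of_nonneg_left (dist_Fword_le hρ hcontr x y w) (hρ i)
    rw [wt_cons, mul_assoc]
    exact (hcontr i _ _).trans this

lemma cell_subset_ball (hρ : ∀ i, 0 < ρ i)
    (hcontr : ∀ i, ∀ x y : M, dist (F i x) (F i y) ≤ ρ i * dist x y)
    {K : Set M} (hK : Bornology.IsBounded K) (hdiam : 0 < Metric.diam K) {C : ℝ} (hC : 1 < C)
    {w : List (Fin N)} {x : M} (hx : x ∈ cell F K w) :
    cell F K w ⊆ Metric.ball x (C * Metric.diam K * wt ρ w) := by
  obtain ⟨x, hxK, rfl⟩ := hx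
  rintro _ ⟨y, hyK, rfl⟩
  have hdist := (dist_Fword_le (fun i => (hρ i).le) hcontr y x w).trans
    (mul_le_mul_of_nonneg_left (Metric.dist_le_diam_of_mem hK hyK hxK) (wt_pos hρ w).le)
  rw [Metric.mem_ball]
  nlinarith [mul_pos hdiam (wt_pos hρ w)]

end Maps

section Measure

variable {M : Type*} [MeasurableSpace M] {F : Fin N → M → M} {p : Fin N → ℝ} {μ : Measure M}

lemma measure_preimage_Fword_eq_zero {K A : Set M} (hKfull : μ Kᶜ = 0) {v : List (Fin N)}
    (hv : ¬ (cell F K v ∩ A).Nonempty) : μ (Fword F v ⁻¹' A) = 0 :=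
  measure_mono_null (fun x hxA hxK => hv ⟨Fword F v x, ⟨x, hxK, rfl⟩, hxA⟩) hKfull

lemma wt_mul_measure_preimage_eq_sum_expansion (ρ : Fin N → ℝ) (r : ℝ)
    (hF : ∀ i, Measurable (F i))
    (hssm : ∀ A : Set M, MeasurableSet A →
      (μ A).toReal = ∑ i, p i * (μ (F i ⁻¹' A)).toReal)
    {A : Set M} (hA : MeasurableSet A) :
    ∀ (n : ℕ) (w : List (Fin N)), wt p w * (μ (Fword F w ⁻¹' A)).toReal
      = ∑ v ∈ expansion ρ r n w, wt p v * (μ (Fword F v ⁻¹' A)).toReal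
  | 0, w => by simp [expansion]
  | n + 1, w => by
    rw [expansion]
    split_ifs
    · simp
    rw [Finset.sum_biUnion (by simpa using pairwiseDisjoint_expansion_append_singleton n w),
      hssm _ ((measurable_Fword hF w) hA), Finset.mul_sum]
    refine Finset.sum_congr rfl fun i _ => ?_
    rw [← wt_mul_measure_preimage_eq_sum_expansion ρ r hF hssm hA n (w ++ [i]), wt_append,
      wt_singleton, preimage_Fword_append_singleton]
    ring

lemma exists_finset_subset_partition_measure_eq_sum {ρ : Fin N → ℝ}
    (hρ : ∀ i, ρ i ∈ Set.Ioo (0 : ℝ) 1) {r : ℝ} (hr : r ∈ Set.Ioo (0 : ℝ) 1)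
    (hF : ∀ i, Measurable (F i))
    (hssm : ∀ A : Set M, MeasurableSet A →
      (μ A).toReal = ∑ i, p i * (μ (F i ⁻¹' A)).toReal)
    {A : Set M} (hA : MeasurableSet A) :
    ∃ Λ : Finset (List (Fin N)), ↑Λ ⊆ partition ρ r ∧
      (μ A).toReal = ∑ v ∈ Λ, wt p v * (μ (Fword F v ⁻¹' A)).toReal := by
  obtain ⟨c, hc0, hc1, hc⟩ := exists_uniform_bound_lt_one fun i => (hρ i).2
  obtain ⟨n, hn⟩ := exists_pow_lt_of_lt_one hr.1 hc1
  refine ⟨expansion ρ r n [], fun v hv => ?_, ?_⟩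
  · rcases mem_expansion (fun i => (hρ i).1) hc hc0.le (by simpa [wt_nil] using hn.le) hv with
      ⟨-, hle⟩ | hmem
    · exact absurd hr.2 (by simpa [wt_nil] using hle)
    · exact hmem
  · simpa [wt_nil, Fword] using wt_mul_measure_preimage_eq_sum_expansion ρ r hF hssm hA n []

lemma sum_wt_mul_measure_preimage_le [IsProbabilityMeasure μ] (hp : ∀ i, 0 < p i)
    {K A : Set M} [DecidablePred fun v => (cell F K v ∩ A).Nonempty] (hKfull : μ Kᶜ = 0)
    (Λ : Finset (List (Fin N))) :
    ∑ v ∈ Λ, wt p v * (μ (Fword F v ⁻¹' A)).toReal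
      ≤ ∑ v ∈ Λ with (cell F K v ∩ A).Nonempty, wt p v := by
  rw [Finset.sum_filter]
  refine Finset.sum_le_sum fun v _ => ?_
  split_ifs with hv
  · exact mul_le_of_le_one_right (wt_pos hp v).le measureReal_le_one
  · simp [measure_preimage_Fword_eq_zero hKfull hv]

end Measure

-- `hP` matters: `Set.ncard` is `0` on infinite sets.
lemma card_filter_le_of_ncard_le {ι M : Type*} {s : ι → Set M} {P : Set ι} (hP : P.Finite)
    {Λ : Finset ι} (hΛ : ↑Λ ⊆ P) {A B : Set M} [DecidablePred fun v => (s v ∩ A).Nonempty]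
    (hAB : A ⊆ B) {L : ℕ}
    (hL : {v | v ∈ P ∧ (s v ∩ B).Nonempty}.ncard ≤ L) :
    #{v ∈ Λ | (s v ∩ A).Nonempty} ≤ L := by
  refine le_trans ?_ hL
  rw [← Set.ncard_coe_finset]
  refine Set.ncard_le_ncard (fun v hv => ?_) (hP.subset fun v hv => hv.1)
  obtain ⟨hvΛ, hvA⟩ := Finset.mem_filter.1 hv
  exact ⟨hΛ hvΛ, hvA.mono (Set.inter_subset_inter_right _ hAB)⟩

end Development

theorem self_similar_measure_cell_upper_bound_general
    {M : Type*} [MetricSpace M] [MeasurableSpace M] [BorelSpace M] {N : ℕ}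
    (F : Fin N → M → M) (ρ p : Fin N → ℝ)
    (hρ : ∀ i, ρ i ∈ Set.Ioo (0 : ℝ) 1) (hp : ∀ i, p i ∈ Set.Ioo (0 : ℝ) 1)
    (hcontr : ∀ i, ∀ x y : M, dist (F i x) (F i y) ≤ ρ i * dist x y)
    (K : Set M) (hKne : K.Nonempty) (hKcomp : IsCompact K)
    (hself : K = ⋃ i, F i '' K) (hdiam : 0 < Metric.diam K)
    (μ : Measure M) [IsProbabilityMeasure μ] (hKfull : μ Kᶜ = 0)
    (hssm : ∀ A : Set M, MeasurableSet A →
      (μ A).toReal = ∑ i, p i * (μ (F i ⁻¹' A)).toReal)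
    (C₁ Cav : ℝ) (hC₁ : 2 ≤ C₁) (hCav : 1 ≤ Cav) (L₁ : ℕ) (hL₁ : 1 ≤ L₁)
    (hWOC : ∀ x ∈ K, ∀ r : ℝ, r ∈ Set.Ioo (0 : ℝ) 1 →
      {v : List (Fin N) | v ∈ partition ρ r ∧
        (cell F K v ∩ Metric.ball x (C₁ * Metric.diam K * r)).Nonempty}.ncard ≤ L₁)
    (hAV : ∀ τ v : List (Fin N), τ ≠ [] → v ∈ partition ρ (wt ρ τ) →
      (cell F K v ∩ cell F K τ).Nonempty → wt p v ≤ Cav * wt p τ) :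
    ∀ τ : List (Fin N), (μ (cell F K τ)).toReal ≤ Cav * L₁ * wt p τ := by
  classical
  intro τ
  rcases eq_or_ne τ [] with rfl | hτ
  · rw [wt_nil, mul_one]
    exact measureReal_le_one.trans (one_le_mul_of_one_le_of_one_le hCav (by exact_mod_cast hL₁))
  have hFc : ∀ i, Continuous (F i) := fun i =>
    (LipschitzWith.of_dist_le_mul (K := ⟨ρ i, (hρ i).1.le⟩) (hcontr i)).continuous
  set r := wt ρ τ
  have hr : r ∈ Set.Ioo (0 : ℝ) 1 := ⟨wt_pos (fun i => (hρ i).1) τ, wt_lt_one hρ hτ⟩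
  obtain ⟨Λ, hΛ, hsum⟩ := exists_finset_subset_partition_measure_eq_sum hρ hr
    (fun i => (hFc i).measurable) hssm
    (hKcomp.image (continuous_Fword hFc τ)).isClosed.measurableSet
  obtain ⟨x, hx⟩ : (cell F K τ).Nonempty := hKne.image _
  have hcard := card_filter_le_of_ncard_le (partition_finite hρ hr.1) hΛ
    (cell_subset_ball (fun i => (hρ i).1) hcontr hKcomp.isBounded hdiam (by linarith) hx)
    (hWOC x (cell_subset hself τ hx) r hr)
  calc (μ (cell F K τ)).toReal
      ≤ ∑ v ∈ Λ with (cell F K v ∩ cell F K τ).Nonempty, wt p v :=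
        hsum ▸ sum_wt_mul_measure_preimage_le (fun i => (hp i).1) hKfull Λ
    _ ≤ ∑ v ∈ Λ with (cell F K v ∩ cell F K τ).Nonempty, Cav * wt p τ :=
        Finset.sum_le_sum fun v hv =>
          hAV τ v hτ (hΛ (Finset.mem_filter.1 hv).1) (Finset.mem_filter.1 hv).2
    _ ≤ L₁ * (Cav * wt p τ) := by
        rw [Finset.sum_const, nsmul_eq_mul]
        gcongr
        · exact mul_nonneg (by linarith) (wt_pos (fun i => (hp i).1) τ).le
    _ = Cav * L₁ * wt p τ := by ring

/-- under the weak overlapping condition `(WOC_ρ)` with bound `L₁`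
and the average condition `(AV_ρ)` with constant `C₊`, the self-similar measure
satisfies `μ(K_τ) ≤ C₊·L₁·p_τ` for every finite word `τ`. -/
theorem self_similar_measure_cell_upper_bound
    {M : Type*} [MetricSpace M] [MeasurableSpace M] [BorelSpace M] {N : ℕ}
    (F : Fin N → M → M) (ρ p : Fin N → ℝ)
    (hρ : ∀ i, ρ i ∈ Set.Ioo (0 : ℝ) 1) (hp : ∀ i, p i ∈ Set.Ioo (0 : ℝ) 1)
    (hpsum : ∑ i, p i = 1)
    (hcontr : ∀ i, ∀ x y : M, dist (F i x) (F i y) ≤ ρ i * dist x y)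
    (K : Set M) (hKne : K.Nonempty) (hKcomp : IsCompact K)
    (hself : K = ⋃ i, F i '' K) (hdiam : 0 < Metric.diam K)
    (μ : Measure M) [IsProbabilityMeasure μ] (hKfull : μ Kᶜ = 0)
    (hssm : ∀ A : Set M, MeasurableSet A →
      (μ A).toReal = ∑ i, p i * (μ (F i ⁻¹' A)).toReal)
    (C₁ Cav : ℝ) (hC₁ : 2 ≤ C₁) (hCav : 1 ≤ Cav) (L₁ : ℕ) (hL₁ : 1 ≤ L₁)
    (hWOC : ∀ x ∈ K, ∀ r : ℝ, r ∈ Set.Ioo (0 : ℝ) 1 →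
      {v : List (Fin N) | v ∈ partition ρ r ∧
        (cell F K v ∩ Metric.ball x (C₁ * Metric.diam K * r)).Nonempty}.ncard ≤ L₁)
    (hAV : ∀ τ v : List (Fin N), τ ≠ [] → v ∈ partition ρ (wt ρ τ) →
      (cell F K v ∩ cell F K τ).Nonempty → wt p v ≤ Cav * wt p τ) :
    ∀ τ : List (Fin N), (μ (cell F K τ)).toReal ≤ Cav * L₁ * wt p τ :=
  self_similar_measure_cell_upper_bound_general F ρ p hρ hp hcontr K hKne hKcomp hself hdiam μ
    hKfull hssm C₁ Cav hC₁ hCav L₁ hL₁ hWOC hAV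

end SSS
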